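/- If M satisfies the base axioms, then for every d ∈ M with P_k(d) and d > 1 there exists d' ∈ M with P_k(d') and d = k•d'. -/

import Mathlib

/-- The base axioms for a Büchi-arithmetic-like structure `M` with distinguished
element `one` and function `V`, over the base `k`. -/
structure BuchiAxioms (k : ℕ) (M : Type*) [AddCancelCommMonoid M] [LinearOrder M]
    (one : M) (V : M → M) : Prop where
  transl : ∀ x y z : M, x ≤ y ↔ x + z ≤ y + z
  one_pos : (0 : M) < one
  discrete : ∀ x y : M, x < y → x + one ≤ y
  ord0 : ∀ x : M, 0 ≤ x
  ord1 : ∀ x y : M, x ≤ y ↔ ∃ z ≤ y, z + x = y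
  mod : ∀ x : M, ∃ a : ℕ, a < k ∧ ∃ z : M, x = a • one + k • z ∨ a • one = x + k • z
  v0 : V 0 = 0 ∧ V one = one
  v1 : (∀ x : M, V (k • x) = k • V x) ∧
    ∀ (d : M) (a : ℕ), (0 < d ∧ V d = d) → 1 ≤ a → a < k → V (a • d) = d
  v2 : ∀ x y : M, 0 < x → 0 < y → V x < V y → V (x + y) = V x
  v3 : ∀ x : M, 0 < x → ∃ y ≤ x, ∃ a : ℕ, 1 ≤ a ∧ a < k ∧
    x = y + a • V x ∧ (V x < V y ∨ y = 0)
  v4 : ∀ x : M, 0 < x → ∃ d : M, (0 < d ∧ V d = d) ∧ d ≤ x ∧ x < k • d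
  v5 : ∀ x : M, V (V x) = V x

/-- `(x)_d = a` : the digit of `x` at position `d` (a power of `k`) equals `a`. -/
def DigitEq {M : Type*} [AddCancelCommMonoid M] [LinearOrder M]
    (V : M → M) (x d : M) (a : ℕ) : Prop :=
  (0 < d ∧ V d = d) ∧ ∃ y < d, ∃ z ≤ x, x = y + a • d + z ∧ (z = 0 ∨ d < V z)

/-! Write `d = a•1 + k•z` or `a•1 = d + k•z` with a digit `a < k`, as (Mod) allows. A nonzero
digit has valuation `1`, while `V (k•z) = k • V z > 1`, and by (V2) the valuation of a sum of
two terms with distinct valuations is the smaller one. So unless `V d = V (k•z)` (or `a = 0`)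
one of the equations forces `V d = 1`, contradicting `d = V d > 1`. Hence
`d = V (k•z) = k • V z`, and `V z` is a power of `k` by (V5). -/

namespace BuchiAxioms

variable {k : ℕ} {M : Type*} [AddCancelCommMonoid M] [LinearOrder M] {one : M} {V : M → M}

theorem isOrderedCancelAddMonoid (H : BuchiAxioms k M one V) : IsOrderedCancelAddMonoid M where
  add_le_add_left a b h c := (H.transl a b c).1 h
  le_of_add_le_add_left a b c h := (H.transl b c a).2 (by rwa [add_comm b, add_comm c])

theorem V_pos (H : BuchiAxioms k M one V) {x : M} (hx : 0 < x) : 0 < V x := by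
  refine (H.ord0 (V x)).lt_of_ne' fun hV => ?_
  obtain ⟨y, -, a, -, -, hxy, hy⟩ := H.v3 x hx
  rw [hV, smul_zero, add_zero] at hxy
  subst hxy
  rcases hy with hlt | rfl
  · exact lt_irrefl _ hlt
  · exact lt_irrefl _ hx

theorem V_nsmul_one (H : BuchiAxioms k M one V) {a : ℕ} (ha : 1 ≤ a) (hak : a < k) :
    V (a • one) = one :=
  H.v1.2 one a ⟨H.one_pos, H.v0.2⟩ ha hak

theorem V_add_of_V_ne (H : BuchiAxioms k M one V) {x y : M} (hx : 0 < x) (hy : 0 < y)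
    (hxy : V x ≠ V y) : V (x + y) = min (V x) (V y) := by
  rcases hxy.lt_or_gt with h | h
  · rw [H.v2 x y hx hy h, min_eq_left h.le]
  · rw [add_comm, H.v2 y x hy hx h, min_eq_right h.le]

theorem one_lt_V_nsmul (H : BuchiAxioms k M one V) (hk : 2 ≤ k) {z : M} (hz : 0 < z) :
    one < V (k • z) := by
  have := H.isOrderedCancelAddMonoid
  have hVz := H.V_pos hz
  rw [H.v1.1]
  calc one ≤ V z := by simpa using H.discrete 0 (V z) hVz
    _ < V z + V z := lt_add_of_pos_right _ hVz
    _ = 2 • V z := (two_nsmul _).symm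
    _ ≤ k • V z := nsmul_le_nsmul_left hVz.le hk

theorem V_nsmul_one_add_nsmul (H : BuchiAxioms k M one V) (hk : 2 ≤ k) {a : ℕ} (ha : 1 ≤ a)
    (hak : a < k) (z : M) : V (a • one + k • z) = one := by
  have := H.isOrderedCancelAddMonoid
  rcases (H.ord0 z).eq_or_lt with rfl | hz
  · rw [smul_zero, add_zero, H.V_nsmul_one ha hak]
  · have hVkz := H.one_lt_V_nsmul hk hz
    rw [H.V_add_of_V_ne (nsmul_pos H.one_pos (by omega)) (nsmul_pos hz (by omega))
      (by rw [H.V_nsmul_one ha hak]; exact hVkz.ne), H.V_nsmul_one ha hak, min_eq_left hVkz.le]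

theorem V_eq_V_nsmul_of_V_add_eq_one (H : BuchiAxioms k M one V) (hk : 2 ≤ k) {x z : M}
    (hx : one < V x) (hsum : V (x + k • z) = one) : V x = V (k • z) := by
  have := H.isOrderedCancelAddMonoid
  by_contra hne
  rcases (H.ord0 z).eq_or_lt with rfl | hz
  · rw [smul_zero, add_zero] at hsum
    exact hx.ne' hsum
  · have hx0 : 0 < x := (H.ord0 x).lt_of_ne' fun h => by
      rw [h, H.v0.1] at hx
      exact (H.ord0 one).not_gt hx
    rw [H.V_add_of_V_ne hx0 (nsmul_pos hz (by omega)) hne] at hsum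
    exact (lt_min hx (H.one_lt_V_nsmul hk hz)).ne' hsum

theorem exists_eq_V_nsmul (H : BuchiAxioms k M one V) (hk : 2 ≤ k) {d : M} (hd : V d = d)
    (hd1 : one < d) : ∃ z, d = V (k • z) := by
  have := H.isOrderedCancelAddMonoid
  obtain ⟨a, hak, z, hz | hz⟩ := H.mod d
  · refine ⟨z, ?_⟩
    rcases Nat.eq_zero_or_pos a with rfl | ha
    · rw [← hd, hz, zero_nsmul, zero_add]
    · have := H.V_nsmul_one_add_nsmul hk ha hak z
      rw [← hz, hd] at this
      exact absurd this hd1.ne'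
  · refine ⟨z, ?_⟩
    rcases Nat.eq_zero_or_pos a with rfl | ha
    · have hd0 : d ≤ 0 := by
        rw [← zero_nsmul one, hz]
        exact le_add_of_nonneg_right (H.ord0 _)
      exact absurd (hd1.trans_le hd0) (H.ord0 one).not_gt
    · rw [← hd]
      refine H.V_eq_V_nsmul_of_V_add_eq_one hk (hd.symm ▸ hd1) ?_
      rw [← hz, H.V_nsmul_one ha hak]

end BuchiAxioms

theorem stmt7 (k : ℕ) (hk : 2 ≤ k) (M : Type*) [AddCancelCommMonoid M] [LinearOrder M]
    (one : M) (V : M → M) (H : BuchiAxioms k M one V) :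
    ∀ d : M, (0 < d ∧ V d = d) → one < d →
      ∃ d' : M, (0 < d' ∧ V d' = d') ∧ d = k • d' := by
  intro d ⟨hd0, hdV⟩ hd1
  obtain ⟨z, hdz⟩ := H.exists_eq_V_nsmul hk hdV hd1
  rw [H.v1.1] at hdz
  have hVz : V z ≠ 0 := fun h => by
    rw [h, smul_zero] at hdz
    exact hd0.ne' hdz
  exact ⟨V z, ⟨(H.ord0 _).lt_of_ne' hVz, H.v5 z⟩, hdz⟩
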